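/- arXiv:2204.11905 — 7 statements merged into one kernel-verified Lean document; each statement's English description precedes it below -/
import Mathlib

section
/- Let Ω ⊆ ℝ^a and E ⊆ ℝ^b be finite sets, B a real b×a matrix, H_Ω an n×a facet matrix for Ω, and H_E an m×b facet matrix for E. Then there exists a natural number k and a simplicial-cone embedding of (Ω, E, B) with k ontic states if and only if there exists an entrywise nonnegative real m×n matrix σ such that B = H_Eᵀ · σ · H_Ω. -/
open Matrix

/-- The cone of nonnegative linear combinations of a finite set of vectors. -/
def coneOf {a : ℕ} (Ω : Finset (Fin a → ℝ)) : Set (Fin a → ℝ) :=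
  {v | ∃ c : (Fin a → ℝ) → ℝ, (∀ x, 0 ≤ c x) ∧ v = ∑ x ∈ Ω, c x • x}

/-- `H` is a facet matrix for the cone generated by `Ω`. -/
def IsFacetMatrix {a n : ℕ} (Ω : Finset (Fin a → ℝ)) (H : Matrix (Fin n) (Fin a) ℝ) : Prop :=
  (∀ v : Fin a → ℝ, 0 ≤ H.mulVec v ↔ v ∈ coneOf Ω) ∧
  (∀ w : Fin a → ℝ, (∀ v ∈ coneOf Ω, 0 ≤ w ⬝ᵥ v) →
    ∃ w2 : Fin n → ℝ, 0 ≤ w2 ∧ w = Hᵀ.mulVec w2)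

/-- A simplicial-cone embedding of the accessible GPT fragment `(Ω, E, B)`
with `k` ontic states. -/
def IsSimplicialConeEmbedding {a b k : ℕ} (Ω : Finset (Fin a → ℝ))
    (E : Finset (Fin b → ℝ)) (B : Matrix (Fin b) (Fin a) ℝ)
    (τΩ : Matrix (Fin k) (Fin a) ℝ) (τE : Matrix (Fin k) (Fin b) ℝ) : Prop :=
  (∀ s ∈ Ω, 0 ≤ τΩ.mulVec s) ∧ (∀ e ∈ E, 0 ≤ τE.mulVec e) ∧ B = τEᵀ * τΩ

/-!
Nonnegativity of `τΩ` on `Ω` says that every row of `τΩ` lies in the dual cone of `Ω`, which is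
generated by the rows of `HΩ`; so `τΩ = P * HΩ` and likewise `τE = Q * HE` with `P, Q ≥ 0`, and
`σ = Qᵀ * P` works. Conversely, `τE = HE` and `τΩ = σ * HΩ` is an embedding with `m` ontic states.
-/

section NonnegEntries

variable {l m n α : Type*} [Fintype m] [Semiring α] [PartialOrder α] [IsOrderedRing α]

lemma Matrix.mul_apply_nonneg {A : Matrix l m α} {B : Matrix m n α}
    (hA : ∀ i j, 0 ≤ A i j) (hB : ∀ i j, 0 ≤ B i j) (i : l) (j : n) : 0 ≤ (A * B) i j :=
  Finset.sum_nonneg fun k _ => mul_nonneg (hA i k) (hB k j)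

lemma Matrix.mulVec_nonneg_of_nonneg {A : Matrix l m α} {v : m → α}
    (hA : ∀ i j, 0 ≤ A i j) (hv : 0 ≤ v) : 0 ≤ A *ᵥ v :=
  fun i => dotProduct_nonneg_of_nonneg (fun j => hA i j) hv

end NonnegEntries

section FacetMatrix

variable {a n : ℕ} {Ω : Finset (Fin a → ℝ)}

lemma mem_coneOf_of_mem {s : Fin a → ℝ} (hs : s ∈ Ω) : s ∈ coneOf Ω := by
  classical
  refine ⟨Pi.single s 1, fun x => ?_, ?_⟩
  · by_cases h : x = s <;> simp [h]
  · simp [Pi.single_apply, ite_smul, hs]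

lemma dotProduct_nonneg_of_mem_coneOf {w v : Fin a → ℝ} (hw : ∀ s ∈ Ω, 0 ≤ w ⬝ᵥ s)
    (hv : v ∈ coneOf Ω) : 0 ≤ w ⬝ᵥ v := by
  obtain ⟨c, hc, rfl⟩ := hv
  rw [dotProduct_sum]
  exact Finset.sum_nonneg fun s hs => by
    rw [dotProduct_smul, smul_eq_mul]
    exact mul_nonneg (hc s) (hw s hs)

variable {H : Matrix (Fin n) (Fin a) ℝ}

lemma IsFacetMatrix.mulVec_nonneg (hH : IsFacetMatrix Ω H) {s : Fin a → ℝ} (hs : s ∈ Ω) :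
    0 ≤ H *ᵥ s :=
  (hH.1 s).2 (mem_coneOf_of_mem hs)

lemma IsFacetMatrix.exists_nonneg_mul_eq (hH : IsFacetMatrix Ω H) {k : ℕ}
    {τ : Matrix (Fin k) (Fin a) ℝ} (hτ : ∀ s ∈ Ω, 0 ≤ τ *ᵥ s) :
    ∃ P : Matrix (Fin k) (Fin n) ℝ, (∀ i j, 0 ≤ P i j) ∧ τ = P * H := by
  have hrow : ∀ i, ∃ p : Fin n → ℝ, 0 ≤ p ∧ τ i = Hᵀ *ᵥ p := fun i =>
    hH.2 (τ i) fun _ hv => dotProduct_nonneg_of_mem_coneOf (fun s hs => hτ s hs i) hv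
  choose P hP hτP using hrow
  refine ⟨Matrix.of P, fun i => hP i, ?_⟩
  funext i
  rw [hτP i, mulVec_transpose, mul_apply_eq_vecMul]
  rfl

end FacetMatrix

theorem simplicial_cone_embedding_iff_lp {a b n m : ℕ}
    (Ω : Finset (Fin a → ℝ)) (E : Finset (Fin b → ℝ))
    (B : Matrix (Fin b) (Fin a) ℝ)
    (HΩ : Matrix (Fin n) (Fin a) ℝ) (HE : Matrix (Fin m) (Fin b) ℝ)
    (hHΩ : IsFacetMatrix Ω HΩ) (hHE : IsFacetMatrix E HE) :
    (∃ (k : ℕ) (τΩ : Matrix (Fin k) (Fin a) ℝ) (τE : Matrix (Fin k) (Fin b) ℝ),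
        IsSimplicialConeEmbedding Ω E B τΩ τE) ↔
    (∃ σ : Matrix (Fin m) (Fin n) ℝ, (∀ i j, 0 ≤ σ i j) ∧ B = HEᵀ * σ * HΩ) := by
  constructor
  · rintro ⟨k, τΩ, τE, hτΩ, hτE, rfl⟩
    obtain ⟨P, hP, rfl⟩ := hHΩ.exists_nonneg_mul_eq hτΩ
    obtain ⟨Q, hQ, rfl⟩ := hHE.exists_nonneg_mul_eq hτE
    refine ⟨Qᵀ * P, mul_apply_nonneg (fun i j => hQ j i) hP, ?_⟩
    simp only [transpose_mul, Matrix.mul_assoc]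
  · rintro ⟨σ, hσ, rfl⟩
    refine ⟨m, σ * HΩ, HE, fun s hs => ?_, fun e he => hHE.mulVec_nonneg he, Matrix.mul_assoc _ _ _⟩
    rw [← mulVec_mulVec]
    exact mulVec_nonneg_of_nonneg hσ (hHΩ.mulVec_nonneg hs)
end

section
/- Let Ω ⊆ ℝ^a and E ⊆ ℝ^b be finite sets, B a real b×a matrix, H_Ω an n×a facet matrix for Ω, and H_E an m×b facet matrix for E. If (τ_Ω, τ_E) is a simplicial-cone embedding of (Ω, E, B) with k ontic states, then there exists an entrywise nonnegative real m×n matrix σ with B = H_Eᵀ · σ · H_Ω. -/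
open Matrix

/-- If every row of `T` pairs nonnegatively with every element of `Ω`, and `H` is a facet
matrix for `Ω`, then `T = P * H` for some entrywise-nonnegative `P`. -/
lemma rows_factor {a n k : ℕ} (Ω : Finset (Fin a → ℝ)) (H : Matrix (Fin n) (Fin a) ℝ)
    (hH : IsFacetMatrix Ω H) (T : Matrix (Fin k) (Fin a) ℝ)
    (hT : ∀ s ∈ Ω, 0 ≤ T.mulVec s) :
    ∃ P : Matrix (Fin k) (Fin n) ℝ, (∀ i j, 0 ≤ P i j) ∧ T = P * H := by
  have key : ∀ i : Fin k, ∃ w2 : Fin n → ℝ, 0 ≤ w2 ∧ T i = Hᵀ.mulVec w2 := by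
    intro i
    apply hH.2
    rintro v ⟨c, hc, rfl⟩
    have : T i ⬝ᵥ ∑ x ∈ Ω, c x • x = ∑ x ∈ Ω, c x * (T i ⬝ᵥ x) := by
      simp only [dotProduct, Finset.sum_apply, Pi.smul_apply, smul_eq_mul, Finset.mul_sum]
      rw [Finset.sum_comm]
      exact Finset.sum_congr rfl fun x _ => Finset.sum_congr rfl fun j _ => by ring
    rw [this]
    exact Finset.sum_nonneg fun x hx => mul_nonneg (hc x) (hT x hx i)
  choose P hP hPeq using key
  refine ⟨Matrix.of P, hP, ?_⟩
  ext i j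
  have := congrFun (hPeq i) j
  simpa [Matrix.mulVec, Matrix.mul_apply, dotProduct, mul_comm] using this

theorem embedding_gives_lp_solution {a b n m k : ℕ}
    (Ω : Finset (Fin a → ℝ)) (E : Finset (Fin b → ℝ))
    (B : Matrix (Fin b) (Fin a) ℝ)
    (HΩ : Matrix (Fin n) (Fin a) ℝ) (HE : Matrix (Fin m) (Fin b) ℝ)
    (hHΩ : IsFacetMatrix Ω HΩ) (hHE : IsFacetMatrix E HE)
    (τΩ : Matrix (Fin k) (Fin a) ℝ) (τE : Matrix (Fin k) (Fin b) ℝ)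
    (hemb : IsSimplicialConeEmbedding Ω E B τΩ τE) :
    ∃ σ : Matrix (Fin m) (Fin n) ℝ, (∀ i j, 0 ≤ σ i j) ∧ B = HEᵀ * σ * HΩ := by
  obtain ⟨h1, h2, h3⟩ := hemb
  obtain ⟨P, hP, hPeq⟩ := rows_factor Ω HΩ hHΩ τΩ h1
  obtain ⟨Q, hQ, hQeq⟩ := rows_factor E HE hHE τE h2
  refine ⟨Qᵀ * P, ?_, ?_⟩
  · intro i j
    rw [Matrix.mul_apply]
    exact Finset.sum_nonneg fun l _ => mul_nonneg (hQ l i) (hP l j)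
  · rw [h3, hPeq, hQeq, Matrix.transpose_mul]
    simp only [Matrix.mul_assoc]
end

section
/- Let Ω^F, E^F ⊆ ℝ^D be finite sets, let a be the dimension of the linear span of Ω^F and b the dimension of the linear span of E^F. Let I_Ω (D×a) and P_Ω (a×D) be real matrices with P_Ω · I_Ω equal to the a×a identity and I_Ω · P_Ω · s = s for every s ∈ Ω^F, and let I_E (D×b) and P_E (b×D) be real matrices with P_E · I_E equal to the b×b identity and I_E · P_E · e = e for every e ∈ E^F. Define Ω^A = {P_Ω s : s ∈ Ω^F} ⊆ ℝ^a, E^A = {P_E e : e ∈ E^F} ⊆ ℝ^b, and B = I_Eᵀ · I_Ω. Then for every natural number k, the GPT fragment (Ω^F, E^F) admits a simplicial-cone embedding with k ontic states if and only if the accessible GPT fragment (Ω^A, E^A, B) admits a simplicial-cone embedding with k ontic states. -/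
open Matrix

/-- A simplicial-cone embedding (with `k` ontic states) of a GPT fragment
`(ΩF, EF)` in `ℝ^D`, whose probability rule is the dot product. -/
def IsGPTFragmentEmbedding {D k : ℕ} (ΩF EF : Finset (Fin D → ℝ))
    (τΩ' τE' : Matrix (Fin k) (Fin D) ℝ) : Prop :=
  (∀ s ∈ ΩF, 0 ≤ τΩ'.mulVec s) ∧ (∀ e ∈ EF, 0 ≤ τE'.mulVec e) ∧
  (∀ s ∈ ΩF, ∀ e ∈ EF, e ⬝ᵥ s = (τE'.mulVec e) ⬝ᵥ (τΩ'.mulVec s))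

lemma mulVec_dot_mulVec {k m n : ℕ} (M : Matrix (Fin k) (Fin m) ℝ)
    (N : Matrix (Fin k) (Fin n) ℝ) (y : Fin m → ℝ) (x : Fin n → ℝ) :
    (M.mulVec y) ⬝ᵥ (N.mulVec x) = y ⬝ᵥ (Mᵀ * N).mulVec x := by
  conv_rhs => rw [← Matrix.mulVec_mulVec, Matrix.dotProduct_mulVec,
    Matrix.vecMul_transpose]

lemma transpose_mul_apply {k m n : ℕ} (M : Matrix (Fin k) (Fin m) ℝ)
    (N : Matrix (Fin k) (Fin n) ℝ) (i : Fin m) (j : Fin n) :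
    (Mᵀ * N) i j = (M.mulVec (Pi.single i 1)) ⬝ᵥ (N.mulVec (Pi.single j 1)) := by
  rw [mulVec_dot_mulVec]
  simp [Matrix.mulVec_single, single_dotProduct]

lemma span_eq_range {D a : ℕ} (ΩF : Finset (Fin D → ℝ))
    (ha : a = Module.finrank ℝ (Submodule.span ℝ (ΩF : Set (Fin D → ℝ))))
    (IΩ : Matrix (Fin D) (Fin a) ℝ) (PΩ : Matrix (Fin a) (Fin D) ℝ)
    (hPIΩ : PΩ * IΩ = 1)
    (hΩproj : ∀ s ∈ ΩF, (IΩ * PΩ).mulVec s = s) :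
    Submodule.span ℝ (ΩF : Set (Fin D → ℝ)) = LinearMap.range IΩ.mulVecLin := by
  have hinj : Function.Injective IΩ.mulVecLin := by
    intro x y hxy
    have : PΩ.mulVec (IΩ.mulVec x) = PΩ.mulVec (IΩ.mulVec y) := by
      simpa [Matrix.mulVecLin_apply] using congrArg PΩ.mulVec hxy
    simpa [Matrix.mulVec_mulVec, hPIΩ] using this
  have hle : Submodule.span ℝ (ΩF : Set (Fin D → ℝ)) ≤ LinearMap.range IΩ.mulVecLin := by
    rw [Submodule.span_le]
    intro s hs
    exact ⟨PΩ.mulVec s, by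
      simpa [Matrix.mulVecLin_apply, ← Matrix.mulVec_mulVec] using hΩproj s hs⟩
  refine Submodule.eq_of_le_of_finrank_le hle ?_
  rw [LinearMap.finrank_range_of_inj hinj, Module.finrank_fin_fun, ← ha]

theorem fragment_embedding_iff_accessible_fragment_embedding {D a b : ℕ}
    (ΩF EF : Finset (Fin D → ℝ))
    (ha : a = Module.finrank ℝ (Submodule.span ℝ (ΩF : Set (Fin D → ℝ))))
    (hb : b = Module.finrank ℝ (Submodule.span ℝ (EF : Set (Fin D → ℝ))))
    (IΩ : Matrix (Fin D) (Fin a) ℝ) (PΩ : Matrix (Fin a) (Fin D) ℝ)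
    (hPIΩ : PΩ * IΩ = 1)
    (hΩproj : ∀ s ∈ ΩF, (IΩ * PΩ).mulVec s = s)
    (IE : Matrix (Fin D) (Fin b) ℝ) (PE : Matrix (Fin b) (Fin D) ℝ)
    (hPIE : PE * IE = 1)
    (hEproj : ∀ e ∈ EF, (IE * PE).mulVec e = e)
    (ΩA : Finset (Fin a → ℝ)) (hΩA : ΩA = ΩF.image (fun s => PΩ.mulVec s))
    (EA : Finset (Fin b → ℝ)) (hEA : EA = EF.image (fun e => PE.mulVec e))
    (B : Matrix (Fin b) (Fin a) ℝ) (hB : B = IEᵀ * IΩ)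
    (k : ℕ) :
    (∃ τΩ' τE' : Matrix (Fin k) (Fin D) ℝ, IsGPTFragmentEmbedding ΩF EF τΩ' τE') ↔
    (∃ (τΩ : Matrix (Fin k) (Fin a) ℝ) (τE : Matrix (Fin k) (Fin b) ℝ),
      IsSimplicialConeEmbedding ΩA EA B τΩ τE) := by
  constructor
  · rintro ⟨τΩ', τE', hΩpos, hEpos, hdot⟩
    refine ⟨τΩ' * IΩ, τE' * IE, ?_, ?_, ?_⟩
    · intro t ht
      rw [hΩA] at ht
      obtain ⟨s, hs, rfl⟩ := Finset.mem_image.mp ht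
      have := hΩpos s hs
      rw [← hΩproj s hs, ← Matrix.mulVec_mulVec] at this
      rwa [← Matrix.mulVec_mulVec]
    · intro f hf
      rw [hEA] at hf
      obtain ⟨e, he, rfl⟩ := Finset.mem_image.mp hf
      have := hEpos e he
      rw [← hEproj e he, ← Matrix.mulVec_mulVec] at this
      rwa [← Matrix.mulVec_mulVec]
    · -- extend the dot-product identity bilinearly to spans
      have claim1 : ∀ e ∈ EF, ∀ v ∈ Submodule.span ℝ (ΩF : Set (Fin D → ℝ)),
          e ⬝ᵥ v = (τE'.mulVec e) ⬝ᵥ (τΩ'.mulVec v) := by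
        intro e he v hv
        induction hv using Submodule.span_induction with
        | mem s hs => exact hdot s hs e he
        | zero => simp
        | add x y hx hy ihx ihy =>
            simp only [Matrix.mulVec_add, dotProduct_add, ihx, ihy]
        | smul c x hx ih =>
            simp only [Matrix.mulVec_smul, dotProduct_smul, ih, smul_eq_mul]
      have claim2 : ∀ w ∈ Submodule.span ℝ (EF : Set (Fin D → ℝ)),
          ∀ v ∈ Submodule.span ℝ (ΩF : Set (Fin D → ℝ)),
          w ⬝ᵥ v = (τE'.mulVec w) ⬝ᵥ (τΩ'.mulVec v) := by
        intro w hw v hv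
        induction hw using Submodule.span_induction with
        | mem e he => exact claim1 e he v hv
        | zero => simp
        | add x y hx hy ihx ihy =>
            simp only [Matrix.mulVec_add, add_dotProduct, ihx, ihy]
        | smul c x hx ih =>
            simp only [Matrix.mulVec_smul, smul_dotProduct, ih, smul_eq_mul]
      have hΩrange := span_eq_range ΩF ha IΩ PΩ hPIΩ hΩproj
      have hErange := span_eq_range EF hb IE PE hPIE hEproj
      ext i j
      have hvi : IE.mulVec (Pi.single i 1) ∈ Submodule.span ℝ (EF : Set (Fin D → ℝ)) := by
        rw [hErange]; exact ⟨Pi.single i 1, rfl⟩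
      have hvj : IΩ.mulVec (Pi.single j 1) ∈ Submodule.span ℝ (ΩF : Set (Fin D → ℝ)) := by
        rw [hΩrange]; exact ⟨Pi.single j 1, rfl⟩
      rw [hB, transpose_mul_apply, transpose_mul_apply,
        ← Matrix.mulVec_mulVec, ← Matrix.mulVec_mulVec]
      exact claim2 _ hvi _ hvj
  · rintro ⟨τΩ, τE, hΩpos, hEpos, hBτ⟩
    refine ⟨τΩ * PΩ, τE * PE, ?_, ?_, ?_⟩
    · intro s hs
      rw [← Matrix.mulVec_mulVec]
      exact hΩpos _ (by rw [hΩA]; exact Finset.mem_image_of_mem _ hs)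
    · intro e he
      rw [← Matrix.mulVec_mulVec]
      exact hEpos _ (by rw [hEA]; exact Finset.mem_image_of_mem _ he)
    · intro s hs e he
      have h1 : e ⬝ᵥ s = (IE.mulVec (PE.mulVec e)) ⬝ᵥ (IΩ.mulVec (PΩ.mulVec s)) := by
        rw [Matrix.mulVec_mulVec, Matrix.mulVec_mulVec, hΩproj s hs, hEproj e he]
      rw [h1, mulVec_dot_mulVec, ← hB, hBτ, ← mulVec_dot_mulVec,
        ← Matrix.mulVec_mulVec, ← Matrix.mulVec_mulVec]
end

section
/- Let Ω ⊆ ℝ^a and E ⊆ ℝ^b be finite sets, B a real b×a matrix, and u ∈ ℝ^b a distinguished unit effect. Assume that E spans ℝ^b and that for every e ∈ E there exists e' ∈ E with e + e' = u. If (Ω, E, B) admits a simplicial-cone embedding with k ontic states, then there exists k' ≤ k and a simplicial-cone embedding (τ_Ω, τ_E) of (Ω, E, B) with k' ontic states such that additionally τ_E · u is the all-ones vector in ℝ^{k'} (i.e., a simplex embedding exists). -/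
open Matrix

theorem simplicial_cone_embedding_gives_simplex_embedding {a b k : ℕ}
    (Ω : Finset (Fin a → ℝ)) (E : Finset (Fin b → ℝ))
    (B : Matrix (Fin b) (Fin a) ℝ) (u : Fin b → ℝ)
    (hspan : Submodule.span ℝ (E : Set (Fin b → ℝ)) = ⊤)
    (hcompl : ∀ e ∈ E, ∃ e' ∈ E, e + e' = u)
    (τΩ : Matrix (Fin k) (Fin a) ℝ) (τE : Matrix (Fin k) (Fin b) ℝ)
    (hemb : IsSimplicialConeEmbedding Ω E B τΩ τE) :
    ∃ (k' : ℕ), k' ≤ k ∧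
      ∃ (τΩ' : Matrix (Fin k') (Fin a) ℝ) (τE' : Matrix (Fin k') (Fin b) ℝ),
        IsSimplicialConeEmbedding Ω E B τΩ' τE' ∧
        τE'.mulVec u = fun _ => 1 := by
  obtain ⟨hΩ, hE, hB⟩ := hemb
  set c : Fin k → ℝ := τE.mulVec u with hc
  -- nonnegativity of c
  have hcnn : ∀ i, 0 ≤ c i := by
    intro i
    by_cases hne : E.Nonempty
    · obtain ⟨e, he⟩ := hne
      obtain ⟨e', he', hee'⟩ := hcompl e he
      have : c i = τE.mulVec e i + τE.mulVec e' i := by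
        rw [hc, ← hee', Matrix.mulVec_add]; rfl
      rw [this]
      exact add_nonneg (hE e he i) (hE e' he' i)
    · have hE0 : (E : Set (Fin b → ℝ)) = ∅ := by
        simpa [Finset.not_nonempty_iff_eq_empty] using hne
      have : u = 0 := by
        have hu : u ∈ Submodule.span ℝ (E : Set (Fin b → ℝ)) := hspan ▸ Submodule.mem_top
        rw [hE0, Submodule.span_empty, Submodule.mem_bot] at hu
        exact hu
      simp [hc, this, Matrix.mulVec_zero]
  -- rows with c i = 0 are zero rows of τE
  have hzero : ∀ i, c i = 0 → ∀ l, τE i l = 0 := by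
    intro i hi l
    set φ : (Fin b → ℝ) →ₗ[ℝ] ℝ := (LinearMap.proj i).comp τE.mulVecLin with hφ
    have hφE : ∀ e ∈ E, φ e = 0 := by
      intro e he
      obtain ⟨e', he', hee'⟩ := hcompl e he
      have hsum : τE.mulVec e i + τE.mulVec e' i = 0 := by
        have : c i = τE.mulVec e i + τE.mulVec e' i := by
          rw [hc, ← hee', Matrix.mulVec_add]; rfl
        linarith [this]
      have := (add_eq_zero_iff_of_nonneg (hE e he i) (hE e' he' i)).mp hsum
      simpa [hφ, Matrix.mulVecLin] using this.1
    have hker : Submodule.span ℝ (E : Set (Fin b → ℝ)) ≤ LinearMap.ker φ := by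
      rw [Submodule.span_le]
      intro e he
      exact hφE e he
    have hφ0 : φ = 0 := by
      rw [← LinearMap.ker_eq_top]
      exact top_unique (hspan ▸ hker)
    have := congrArg (fun ψ => ψ (Pi.single l 1)) hφ0
    simpa [hφ, Matrix.mulVecLin, Matrix.mulVec_single] using this
  -- the support
  set S : Finset (Fin k) := Finset.univ.filter (fun i => c i ≠ 0) with hS
  set k' : ℕ := S.card with hk'
  have hk'le : k' ≤ k := by
    calc k' ≤ Finset.univ.card := Finset.card_le_univ S
    _ = k := by simp
  set ee := S.orderIsoOfFin rfl with hee
  set f : Fin k' → Fin k := fun j => (ee j : Fin k) with hf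
  have hfS : ∀ j, c (f j) ≠ 0 := by
    intro j
    have : (f j) ∈ S := (ee j).2
    simpa [hS] using this
  have hfpos : ∀ j, 0 < c (f j) := fun j => lt_of_le_of_ne (hcnn (f j)) (Ne.symm (hfS j))
  refine ⟨k', hk'le, ?_⟩
  set τΩ' : Matrix (Fin k') (Fin a) ℝ := fun j m => c (f j) * τΩ (f j) m with hτΩ'
  set τE' : Matrix (Fin k') (Fin b) ℝ := fun j l => τE (f j) l / c (f j) with hτE'
  have hmulE : ∀ v : Fin b → ℝ, ∀ j, τE'.mulVec v j = τE.mulVec v (f j) / c (f j) := by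
    intro v j
    simp only [hτE', Matrix.mulVec, dotProduct, div_mul_eq_mul_div]
    rw [← Finset.sum_div]
  refine ⟨τΩ', τE', ⟨?_, ?_, ?_⟩, ?_⟩
  · intro s hs j
    have := hΩ s hs (f j)
    simp only [hτΩ', Matrix.mulVec, dotProduct]
    have h2 : (0:ℝ) ≤ ∑ m, τΩ (f j) m * s m := hΩ s hs (f j)
    calc (0:ℝ) ≤ c (f j) * ∑ m, τΩ (f j) m * s m :=
          mul_nonneg (hcnn (f j)) h2
      _ = ∑ m, c (f j) * τΩ (f j) m * s m := by
          rw [Finset.mul_sum]; congr 1; ext m; ring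
  · intro e he j
    rw [hmulE e j]
    exact div_nonneg (hE e he (f j)) (hcnn (f j))
  · ext l m
    have hBlm : B l m = ∑ i, τE i l * τΩ i m := by
      rw [hB]; simp [Matrix.mul_apply, Matrix.transpose_apply]
    rw [Matrix.mul_apply] at *
    simp only [Matrix.transpose_apply]
    have hsplit : ∑ i, τE i l * τΩ i m = ∑ i ∈ S, τE i l * τΩ i m := by
      symm
      apply Finset.sum_subset (Finset.subset_univ S)
      intro i _ hiS
      have : c i = 0 := by
        by_contra h
        exact hiS (by simp [hS, h])
      rw [hzero i this l, zero_mul]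
    have hSsum : ∑ i ∈ S, τE i l * τΩ i m = ∑ j : Fin k', τE (f j) l * τΩ (f j) m := by
      rw [← Finset.sum_coe_sort S (fun i => τE i l * τΩ i m)]
      exact (Equiv.sum_comp ee.toEquiv (fun x => τE (x : Fin k) l * τΩ (x : Fin k) m)).symm
    have : ∀ j : Fin k', τE' j l * τΩ' j m = τE (f j) l * τΩ (f j) m := by
      intro j
      have hcne := hfS j
      simp only [hτE', hτΩ']
      field_simp
    rw [hBlm, hsplit, hSsum]
    exact (Finset.sum_congr rfl (fun j _ => this j)).symm
  · funext j
    rw [hmulE u j]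
    exact div_self (hfS j)
end

section
/- Let Ω ⊆ ℝ^a and E ⊆ ℝ^b be finite sets, B a real b×a matrix, H_Ω an n×a facet matrix for Ω, and H_E an m×b facet matrix for E. If (Ω, E, B) admits a simplicial-cone embedding with some number k of ontic states, then it admits a simplicial-cone embedding with at most a·b ontic states. -/
open Matrix

/-- Conic Carathéodory: a nonnegative combination of a family of vectors can be rewritten
as a nonnegative combination of a linearly independent subfamily. -/
lemma cone_caratheodory {V : Type*} [AddCommGroup V] [Module ℝ V]
    {ι : Type*} [DecidableEq ι] (f : ι → V) (s : Finset ι) :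
    ∀ c : ι → ℝ, (∀ i ∈ s, 0 ≤ c i) →
    ∃ t ⊆ s, LinearIndependent ℝ (fun i : t => f i) ∧
      ∃ c' : ι → ℝ, (∀ i, 0 ≤ c' i) ∧ ∑ i ∈ t, c' i • f i = ∑ i ∈ s, c i • f i := by
  induction s using Finset.strongInductionOn with
  | _ s ih =>
    intro c hc
    by_cases hli : LinearIndependent ℝ (fun i : s => f i)
    · refine ⟨s, subset_rfl, hli, fun i => if i ∈ s then c i else 0, ?_, ?_⟩
      · intro i
        by_cases h : i ∈ s
        · simpa [h] using hc i h
        · simp [h]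
      · exact Finset.sum_congr rfl fun i hi => by simp [hi]
    · -- there is a nontrivial linear relation
      obtain ⟨g, hg0, i1, hi1⟩ := Fintype.not_linearIndependent_iff.mp hli
      set G : ι → ℝ := fun i => if h : i ∈ s then g ⟨i, h⟩ else 0 with hG
      have hGsum : ∑ i ∈ s, G i • f i = 0 := by
        rw [← hg0, ← Finset.sum_coe_sort s (fun i => G i • f i)]
        exact Finset.sum_congr rfl fun i _ => by simp [hG]
      -- WLOG there is a positive coefficient: choose sign
      have key : ∀ G' : ι → ℝ, (∑ i ∈ s, G' i • f i = 0) → (∃ i ∈ s, 0 < G' i) →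
          ∃ t ⊆ s, LinearIndependent ℝ (fun i : t => f i) ∧
            ∃ c' : ι → ℝ, (∀ i, 0 ≤ c' i) ∧ ∑ i ∈ t, c' i • f i = ∑ i ∈ s, c i • f i := by
        intro G' hG'sum hpos
        set T : Finset ι := s.filter (fun i => 0 < G' i) with hT
        have hTne : T.Nonempty := by
          obtain ⟨i, hi, hip⟩ := hpos
          exact ⟨i, Finset.mem_filter.mpr ⟨hi, hip⟩⟩
        obtain ⟨i0, hi0T, hi0min⟩ := Finset.exists_mem_eq_inf' hTne (fun i => c i / G' i)
        set r : ℝ := T.inf' hTne (fun i => c i / G' i) with hr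
        have hi0s : i0 ∈ s := (Finset.mem_filter.mp hi0T).1
        have hi0p : 0 < G' i0 := (Finset.mem_filter.mp hi0T).2
        have hrnn : 0 ≤ r := by
          rw [hi0min]
          exact div_nonneg (hc i0 hi0s) hi0p.le
        set c2 : ι → ℝ := fun i => c i - r * G' i with hc2
        have hc2nn : ∀ i ∈ s, 0 ≤ c2 i := by
          intro i hi
          by_cases hip : 0 < G' i
          · have hiT : i ∈ T := Finset.mem_filter.mpr ⟨hi, hip⟩
            have : r ≤ c i / G' i := Finset.inf'_le _ hiT
            have := (le_div_iff₀ hip).mp this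
            simp [hc2]; linarith
          · push_neg at hip
            have : r * G' i ≤ 0 := mul_nonpos_of_nonneg_of_nonpos hrnn hip
            have := hc i hi
            simp [hc2]; linarith
        have hc2i0 : c2 i0 = 0 := by
          simp [hc2, hi0min, div_mul_cancel₀ _ (ne_of_gt hi0p)]
        have hz : ∑ i ∈ s, (r * G' i) • f i = 0 := by
          simp only [← smul_smul, ← Finset.smul_sum, hG'sum, smul_zero]
        have hsum2 : ∑ i ∈ s, c2 i • f i = ∑ i ∈ s, c i • f i := by
          simp only [hc2, sub_smul, Finset.sum_sub_distrib, hz, sub_zero]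
        have hsub : s.erase i0 ⊂ s := Finset.erase_ssubset hi0s
        obtain ⟨t, hts, hli', c', hc'nn, hc'sum⟩ :=
          ih (s.erase i0) hsub c2 (fun i hi => hc2nn i (Finset.mem_of_mem_erase hi))
        refine ⟨t, hts.trans (Finset.erase_subset _ _), hli', c', hc'nn, ?_⟩
        rw [hc'sum, ← hsum2, ← Finset.add_sum_erase s _ hi0s, hc2i0, zero_smul, zero_add]
      by_cases hsign : ∃ i ∈ s, 0 < G i
      · exact key G hGsum hsign
      · apply key (fun i => -G i)
        · simp only [neg_smul, Finset.sum_neg_distrib, hGsum, neg_zero]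
        · push_neg at hsign
          refine ⟨i1, i1.prop, ?_⟩
          have h1 : G i1 ≠ 0 := by
            simpa [hG, Subtype.coe_eta] using hi1
          have h2 : G i1 ≤ 0 := hsign i1 i1.prop
          have : G i1 < 0 := lt_of_le_of_ne h2 h1
          linarith

theorem ontic_state_bound {a b n m k : ℕ}
    (Ω : Finset (Fin a → ℝ)) (E : Finset (Fin b → ℝ))
    (B : Matrix (Fin b) (Fin a) ℝ)
    (HΩ : Matrix (Fin n) (Fin a) ℝ) (HE : Matrix (Fin m) (Fin b) ℝ)
    (hHΩ : IsFacetMatrix Ω HΩ) (hHE : IsFacetMatrix E HE)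
    (τΩ : Matrix (Fin k) (Fin a) ℝ) (τE : Matrix (Fin k) (Fin b) ℝ)
    (hemb : IsSimplicialConeEmbedding Ω E B τΩ τE) :
    ∃ (k' : ℕ), k' ≤ a * b ∧
      ∃ (τΩ' : Matrix (Fin k') (Fin a) ℝ) (τE' : Matrix (Fin k') (Fin b) ℝ),
        IsSimplicialConeEmbedding Ω E B τΩ' τE' := by
  obtain ⟨hΩ, hE, hB⟩ := hemb
  -- rank-one matrices
  set M : Fin k → Matrix (Fin b) (Fin a) ℝ :=
    fun i => Matrix.of fun j j' => τE i j * τΩ i j' with hM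
  have hBsum : B = ∑ i ∈ Finset.univ, (1 : ℝ) • M i := by
    rw [hB]
    ext j j'
    simp [hM, Matrix.mul_apply, Matrix.transpose_apply, Matrix.sum_apply]
  obtain ⟨t, -, hli, c', hc'nn, hc'sum⟩ :=
    cone_caratheodory M Finset.univ (fun _ => (1 : ℝ)) (fun _ _ => zero_le_one)
  have hcard : t.card ≤ a * b := by
    have h1 := hli.fintype_card_le_finrank
    rw [Fintype.card_coe] at h1
    have h2 : Module.finrank ℝ (Matrix (Fin b) (Fin a) ℝ) = b * a := by
      rw [Module.finrank_matrix]
      simp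
    rw [h2] at h1
    exact h1.trans_eq (Nat.mul_comm b a)
  refine ⟨t.card, hcard, ?_⟩
  -- enumerate t
  set e := t.equivFin with he
  refine ⟨Matrix.of fun l j' => τΩ (e.symm l).val j',
    Matrix.of fun l j => c' (e.symm l).val * τE (e.symm l).val j, ?_, ?_, ?_⟩
  · intro s hs
    intro l
    simpa [Matrix.mulVec, dotProduct] using hΩ s hs (e.symm l).val
  · intro x hx l
    have h1 : 0 ≤ τE.mulVec x (e.symm l).val := hE x hx _
    have h2 : 0 ≤ c' (e.symm l).val := hc'nn _
    simp only [Matrix.mulVec, dotProduct, Matrix.of_apply]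
    calc (0:ℝ) = c' (e.symm l).val * 0 := by ring
    _ ≤ c' (e.symm l).val * (∑ j, τE (e.symm l).val j * x j) := by
        apply mul_le_mul_of_nonneg_left _ h2
        simpa [Matrix.mulVec, dotProduct] using h1
    _ = ∑ j, c' (e.symm l).val * τE (e.symm l).val j * x j := by
        rw [Finset.mul_sum]; ring_nf
  · -- B = τE'ᵀ * τΩ'
    have hBt : B = ∑ i ∈ t, c' i • M i := by
      rw [hc'sum, ← hBsum]
    ext j j'
    rw [hBt, Matrix.mul_apply, Matrix.sum_apply,
      ← Finset.sum_coe_sort t (fun i => (c' i • M i) j j'),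
      ← Equiv.sum_comp e.symm (fun i : { x // x ∈ t } => (c' i.val • M i.val) j j')]
    apply Finset.sum_congr rfl
    intro l _
    simp [hM, Matrix.transpose_apply]
    ring
end

section
/- Let H_Ω be the real 4×3 matrix with rows (1,1,1), (1,1,−1), (1,−1,1), (1,−1,−1), and let H_E be the real 4×3 matrix with rows (1,0,1), (1,0,−1), (1,1,0), (1,−1,0). Then there is no entrywise nonnegative real 4×4 matrix σ such that H_Eᵀ · σ · H_Ω equals the 3×3 identity matrix. (Consequently, the Boxworld fragment of Example 3 admits no simplicial-cone embedding, i.e., no classical explanation.) -/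
/-!
Farkas duality: pair `HEᵀ * σ * HΩ = 1` with the dual certificate `Y = diag(1, -1, -1)`.
The pairing equals `trace Y = -1` on the one hand and `trace (HΩ * Y * HEᵀ * σ)` on the other,
and the latter is nonnegative because every entry of `HΩ * Y * HEᵀ` has the form `1 - s t` with
`s, t = ±1`.
-/

open Matrix

namespace Matrix

variable {m m' n R : Type*} [Fintype m] [Fintype m'] [Fintype n]
  [CommSemiring R] [PartialOrder R] [IsOrderedRing R]

theorem trace_mul_nonneg_of_entrywise_nonneg {W : Matrix m' m R} {σ : Matrix m m' R}
    (hW : ∀ j i, 0 ≤ W j i) (hσ : ∀ i j, 0 ≤ σ i j) : 0 ≤ trace (W * σ) :=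
  Finset.sum_nonneg fun j _ => Finset.sum_nonneg fun i _ => mul_nonneg (hW j i) (hσ i j)

theorem trace_nonneg_of_transpose_mul_mul_eq_one [DecidableEq n]
    {A : Matrix m n R} {B : Matrix m' n R} {σ : Matrix m m' R}
    (hσ : ∀ i j, 0 ≤ σ i j) (h : Aᵀ * σ * B = 1)
    (Y : Matrix n n R) (hY : ∀ j i, 0 ≤ (B * Y * Aᵀ) j i) : 0 ≤ trace Y := by
  calc 0 ≤ trace (B * Y * Aᵀ * σ) := trace_mul_nonneg_of_entrywise_nonneg hY hσ
    _ = trace (Y * (Aᵀ * σ * B)) := by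
      simp only [Matrix.mul_assoc]
      rw [trace_mul_comm]
      simp only [Matrix.mul_assoc]
    _ = trace Y := by rw [h, Matrix.mul_one]

end Matrix

theorem boxworld_no_simplicial_cone_embedding :
    let HΩ : Matrix (Fin 4) (Fin 3) ℝ := !![1, 1, 1; 1, 1, -1; 1, -1, 1; 1, -1, -1]
    let HE : Matrix (Fin 4) (Fin 3) ℝ := !![1, 0, 1; 1, 0, -1; 1, 1, 0; 1, -1, 0]
    ¬ ∃ σ : Matrix (Fin 4) (Fin 4) ℝ, (∀ i j, 0 ≤ σ i j) ∧
      HEᵀ * σ * HΩ = (1 : Matrix (Fin 3) (Fin 3) ℝ) := by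
  intro HΩ HE ⟨σ, hσ, h⟩
  let Y : Matrix (Fin 3) (Fin 3) ℝ := diagonal ![1, -1, -1]
  have hY : ∀ j i, 0 ≤ (HΩ * Y * HEᵀ) j i := by
    intro j i
    fin_cases j <;> fin_cases i <;>
      simp [HΩ, HE, Y, mul_apply, Fin.sum_univ_three, vecMul_diagonal]
  have htrace : trace Y = -1 := by simp [Y, Fin.sum_univ_three]
  linarith [trace_nonneg_of_transpose_mul_mul_eq_one hσ h Y hY]
end

section
/- Let H_Ω be the real 4×3 matrix with rows (1,1,1), (1,1,−1), (1,−1,1), (1,−1,−1), let H_E be the real 4×3 matrix with rows (1,0,1), (1,0,−1), (1,1,0), (1,−1,0), and let M be the 3×3 matrix whose (1,1) entry is 1 and all other entries are 0. Then for every real number r with 0 ≤ r < 1/2, there is no entrywise nonnegative real 4×4 matrix σ such that H_Eᵀ · σ · H_Ω = r·M + (1−r)·I₃, where I₃ is the 3×3 identity matrix. (Hence the robustness of nonclassicality of the Boxworld fragment of Example 3 under depolarizing noise is exactly 1/2.) -/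
open Matrix

theorem boxworld_robustness_lower_bound :
    let HΩ : Matrix (Fin 4) (Fin 3) ℝ := !![1, 1, 1; 1, 1, -1; 1, -1, 1; 1, -1, -1]
    let HE : Matrix (Fin 4) (Fin 3) ℝ := !![1, 0, 1; 1, 0, -1; 1, 1, 0; 1, -1, 0]
    let M : Matrix (Fin 3) (Fin 3) ℝ := !![1, 0, 0; 0, 0, 0; 0, 0, 0]
    ∀ r : ℝ, 0 ≤ r → r < 1 / 2 →
      ¬ ∃ σ : Matrix (Fin 4) (Fin 4) ℝ, (∀ i j, 0 ≤ σ i j) ∧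
        HEᵀ * σ * HΩ = r • M + (1 - r) • (1 : Matrix (Fin 3) (Fin 3) ℝ) := by
  intro HΩ HE M r hr hr2 ⟨σ, hpos, heq⟩
  have h00 := congrFun (congrFun heq 0) 0
  have h11 := congrFun (congrFun heq 1) 1
  have h22 := congrFun (congrFun heq 2) 2
  simp [HΩ, HE, M, Matrix.mul_apply, Fin.sum_univ_three, Fin.sum_univ_four, Matrix.vecHead, Matrix.vecTail, Matrix.one_apply] at h00 h11 h22
  linarith [hpos 0 0, hpos 0 1, hpos 0 2, hpos 0 3, hpos 1 0, hpos 1 1, hpos 1 2, hpos 1 3,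
    hpos 2 0, hpos 2 1, hpos 2 2, hpos 2 3, hpos 3 0, hpos 3 1, hpos 3 2, hpos 3 3]
end
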